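/- arXiv:1107.1420 — 6 statements merged into one kernel-verified Lean document; each statement's English description precedes it below -/
import Mathlib

section
/- Let n ≥ 1 and let X : ℝ → (n×n complex matrices) be differentiable at a point τ₀ with derivative X'(τ₀). Then the map τ ↦ exp(X(τ)) is differentiable at τ₀ with derivative exp(X(τ₀)) * (∑_{k=0}^∞ ((−1)^k/(k+1)!) • (ad_{X(τ₀)})^k(X'(τ₀))), where ad_A(Z) := A*Z − Z*A and (ad_A)^k denotes the k-fold iterate of ad_A. -/
/-!
Differentiating the exponential series term by term, the derivative of `exp` at `A` sends `B` to
`∑ₘ (∑_{i+j=m} Aⁱ B Aʲ) / (m+1)!`. Right multiplication by `A` is `L_A - ad_A`, where left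
multiplication `L_A` commutes with `ad_A`; expanding `(L_A - ad_A)ʲ` binomially and inducting on
`m` with Pascal's rule turns the sandwich sum into `∑_{a+k=m} (-1)ᵏ C(m+1,k+1) Aᵃ ad_Aᵏ B`.
Since `C(m+1,k+1)/(m+1)! = 1/(a! (k+1)!)`, the resulting double series is the Cauchy product of
`exp A = ∑ Aᵃ/a!` with `∑ (-1)ᵏ ad_Aᵏ B/(k+1)!`.
-/

open Finset NormedSpace
open scoped Nat RightActions

theorem Commute.sum_antidiagonal_pow_mul_add_pow {S : Type*} [Semiring S] {x y : S}
    (h : Commute x y) (N : ℕ) :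
    ∑ p ∈ antidiagonal N, x ^ p.1 * (x + y) ^ p.2 =
      ∑ p ∈ antidiagonal N, (N + 1).choose (p.2 + 1) • (x ^ p.1 * y ^ p.2) := by
  induction N with
  | zero => simp
  | succ N ih =>
    have pascal : ∀ p ∈ antidiagonal (N + 1), (N + 2).choose (p.2 + 1) • (x ^ p.1 * y ^ p.2) =
        (N + 1).choose p.2 • (x ^ p.1 * y ^ p.2) +
          (N + 1).choose (p.2 + 1) • (x ^ p.1 * y ^ p.2) := fun p _ => by
      rw [Nat.choose_succ_succ, add_smul]
    have binomial : ∑ p ∈ antidiagonal (N + 1), (N + 1).choose p.2 • (x ^ p.1 * y ^ p.2) =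
        (x + y) ^ (N + 1) := by
      rw [h.add_pow']
      exact sum_congr rfl fun p hp => by
        rw [Nat.choose_symm_of_eq_add (mem_antidiagonal.mp hp).symm]
    rw [sum_congr rfl pascal, sum_add_distrib, binomial, Nat.sum_antidiagonal_succ,
      Nat.sum_antidiagonal_succ]
    simp only [pow_zero, one_mul, Nat.choose_succ_self, zero_smul, mul_zero, zero_add, pow_succ',
      mul_assoc, ← mul_smul_comm, ← mul_sum, ih]

theorem sum_antidiagonal_pow_mul_mul_pow_eq_sum_iterate_ad {R : Type*} [Ring R] (A B : R)
    (N : ℕ) :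
    ∑ p ∈ antidiagonal N, A ^ p.1 * B * A ^ p.2 =
      ∑ p ∈ antidiagonal N, ((-1 : ℤ) ^ p.2 * (N + 1).choose (p.2 + 1)) •
        (A ^ p.1 * (fun Z => A * Z - Z * A)^[p.2] B) := by
  set ad := LinearMap.mulLeft ℤ A - LinearMap.mulRight ℤ A
  have hcomm : Commute (LinearMap.mulLeft ℤ A) ((-1 : ℤ) • ad) :=
    ((Commute.refl _).sub_right (LinearMap.commute_mulLeft_right A A)).smul_right _
  have key := LinearMap.congr_fun (hcomm.sum_antidiagonal_pow_mul_add_pow N) B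
  have hright : LinearMap.mulLeft ℤ A + (-1 : ℤ) • ad = LinearMap.mulRight ℤ A := by
    rw [neg_one_smul, neg_sub, add_sub_cancel]
  have had : ⇑ad = fun Z => A * Z - Z * A := rfl
  simp only [hright, had, smul_pow, LinearMap.sum_apply, Module.End.mul_apply,
    LinearMap.pow_mulRight, LinearMap.pow_mulLeft, LinearMap.smul_apply, Module.End.pow_apply,
    LinearMap.mulLeft_apply, LinearMap.mulRight_apply] at key
  simpa only [mul_assoc, mul_smul_comm, ← natCast_zsmul, smul_smul, mul_comm] using key

theorem sum_antidiagonal_inv_factorial_smul_pow_mul_iterate_ad {𝕂 𝔸 : Type*} [Field 𝕂]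
    [CharZero 𝕂] [Ring 𝔸] [Algebra 𝕂 𝔸] (A B : 𝔸) (N : ℕ) :
    ∑ p ∈ antidiagonal N, ((p.1 !⁻¹ : 𝕂) • A ^ p.1) *
        (((-1 : 𝕂) ^ p.2 / ((p.2 + 1)! : 𝕂)) • (fun Z => A * Z - Z * A)^[p.2] B) =
      ((N + 1)!⁻¹ : 𝕂) • ∑ p ∈ antidiagonal N, A ^ p.1 * B * A ^ p.2 := by
  rw [sum_antidiagonal_pow_mul_mul_pow_eq_sum_iterate_ad, smul_sum]
  refine sum_congr rfl fun ⟨a, k⟩ hak => ?_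
  obtain rfl : a + k = N := mem_antidiagonal.mp hak
  have hfac : (((a + k + 1).choose (k + 1) : ℕ) : 𝕂) * a ! * (k + 1)! = (a + k + 1)! := by
    exact_mod_cast Nat.add_choose_mul_factorial_mul_factorial a (k + 1)
  rw [smul_mul_smul_comm, ← Int.cast_smul_eq_zsmul 𝕂, smul_smul]
  congr 1
  push_cast
  have hchoose : ((a + k + 1).choose (k + 1) : 𝕂) ≠ 0 := by
    exact_mod_cast (Nat.choose_pos (by omega)).ne'
  rw [← hfac]
  field_simp

section NormedAlgebra

variable {𝕂 𝔸 : Type*} [RCLike 𝕂] [NormedRing 𝔸] [NormedAlgebra 𝕂 𝔸]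

variable (𝕂) in
noncomputable def expTermFDeriv (m : ℕ) (x : 𝔸) : 𝔸 →L[𝕂] 𝔸 :=
  (m !⁻¹ : 𝕂) • ∑ i ∈ range m, x ^ (m.pred - i) •> ContinuousLinearMap.id 𝕂 𝔸 <• x ^ i

theorem hasFDerivAt_inv_factorial_smul_pow (m : ℕ) (x : 𝔸) :
    HasFDerivAt (fun y : 𝔸 => (m !⁻¹ : 𝕂) • y ^ m) (expTermFDeriv 𝕂 m x) x :=
  (hasFDerivAt_pow' (𝕜 := 𝕂) m).const_smul (m !⁻¹ : 𝕂)

theorem expTermFDeriv_succ_apply (m : ℕ) (x B : 𝔸) :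
    expTermFDeriv 𝕂 (m + 1) x B =
      ((m + 1)!⁻¹ : 𝕂) • ∑ p ∈ antidiagonal m, x ^ p.1 * B * x ^ p.2 := by
  rw [← Nat.sum_antidiagonal_swap]
  simp only [Prod.fst_swap, Prod.snd_swap]
  rw [Nat.sum_antidiagonal_eq_sum_range_succ (fun i j => x ^ j * B * x ^ i)]
  simp [expTermFDeriv]

theorem norm_pow_mul_le (x y : 𝔸) (p : ℕ) : ‖x ^ p * y‖ ≤ ‖x‖ ^ p * ‖y‖ := by
  induction p with
  | zero => simp
  | succ p ih =>
    calc ‖x ^ (p + 1) * y‖ ≤ ‖x‖ * ‖x ^ p * y‖ := by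
          rw [pow_succ', mul_assoc]; exact norm_mul_le _ _
      _ ≤ ‖x‖ ^ (p + 1) * ‖y‖ := by rw [pow_succ', mul_assoc]; gcongr

theorem norm_mul_pow_le (x y : 𝔸) (q : ℕ) : ‖y * x ^ q‖ ≤ ‖y‖ * ‖x‖ ^ q := by
  induction q with
  | zero => simp
  | succ q ih =>
    calc ‖y * x ^ (q + 1)‖ ≤ ‖y * x ^ q‖ * ‖x‖ := by
          rw [pow_succ, ← mul_assoc]; exact norm_mul_le _ _
      _ ≤ ‖y‖ * ‖x‖ ^ (q + 1) := by rw [pow_succ, ← mul_assoc]; gcongr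

theorem norm_sum_antidiagonal_pow_mul_mul_pow_le (x B : 𝔸) (m : ℕ) :
    ‖∑ p ∈ antidiagonal m, x ^ p.1 * B * x ^ p.2‖ ≤ (m + 1) * ‖x‖ ^ m * ‖B‖ := by
  calc ‖∑ p ∈ antidiagonal m, x ^ p.1 * B * x ^ p.2‖
      ≤ ∑ p ∈ antidiagonal m, ‖x‖ ^ m * ‖B‖ := by
        refine norm_sum_le_of_le _ fun p hp => ?_
        rw [← mem_antidiagonal.mp hp, pow_add, mul_right_comm]
        exact (norm_mul_pow_le _ _ _).trans (by gcongr; exact norm_pow_mul_le _ _ _)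
    _ = (m + 1) * ‖x‖ ^ m * ‖B‖ := by
        rw [sum_const, Nat.card_antidiagonal, nsmul_eq_mul, mul_assoc]; push_cast; ring

theorem norm_expTermFDeriv_succ_le (m : ℕ) (x : 𝔸) :
    ‖expTermFDeriv 𝕂 (m + 1) x‖ ≤ ‖x‖ ^ m / m ! := by
  refine ContinuousLinearMap.opNorm_le_bound _ (by positivity) fun B => ?_
  rw [expTermFDeriv_succ_apply, norm_smul, norm_inv, RCLike.norm_natCast]
  calc ((m + 1)! : ℝ)⁻¹ * ‖∑ p ∈ antidiagonal m, x ^ p.1 * B * x ^ p.2‖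
      ≤ ((m + 1)! : ℝ)⁻¹ * ((m + 1) * ‖x‖ ^ m * ‖B‖) := by
        gcongr; exact norm_sum_antidiagonal_pow_mul_mul_pow_le x B m
    _ = ‖x‖ ^ m / m ! * ‖B‖ := by
        rw [Nat.factorial_succ]; push_cast; field_simp

theorem norm_iterate_ad_le (A B : 𝔸) (k : ℕ) :
    ‖(fun Z => A * Z - Z * A)^[k] B‖ ≤ (2 * ‖A‖) ^ k * ‖B‖ := by
  induction k with
  | zero => simp
  | succ k ih =>
    set Z := (fun Z => A * Z - Z * A)^[k] B
    calc ‖(fun Z => A * Z - Z * A)^[k + 1] B‖ = ‖A * Z - Z * A‖ := by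
          rw [Function.iterate_succ_apply']
      _ ≤ ‖A‖ * ‖Z‖ + ‖Z‖ * ‖A‖ := norm_sub_le_of_le (norm_mul_le _ _) (norm_mul_le _ _)
      _ ≤ (2 * ‖A‖) ^ (k + 1) * ‖B‖ := by
          rw [pow_succ]; nlinarith [norm_nonneg A]

theorem summable_norm_smul_iterate_ad (A B : 𝔸) :
    Summable fun k => ‖((-1 : 𝕂) ^ k / ((k + 1)! : 𝕂)) • (fun Z => A * Z - Z * A)^[k] B‖ := by
  refine ((Real.summable_pow_div_factorial (2 * ‖A‖)).mul_right ‖B‖).of_nonneg_of_le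
    (fun _ => norm_nonneg _) fun k => ?_
  rw [norm_smul, norm_div, norm_pow, norm_neg, norm_one, one_pow, RCLike.norm_natCast]
  calc 1 / ((k + 1)! : ℝ) * ‖(fun Z => A * Z - Z * A)^[k] B‖
      ≤ 1 / k ! * ((2 * ‖A‖) ^ k * ‖B‖) := by
        gcongr
        · exact k.le_succ
        · exact norm_iterate_ad_le A B k
    _ = (2 * ‖A‖) ^ k / k ! * ‖B‖ := by ring

variable [CompleteSpace 𝔸]

theorem exp_eq_one_add_tsum (x : 𝔸) :
    exp x = 1 + ∑' m, ((m + 1)!⁻¹ : 𝕂) • x ^ (m + 1) := by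
  rw [congrFun (exp_eq_tsum 𝕂) x, (expSeries_summable' x).tsum_eq_zero_add]
  simp

theorem summable_expTermFDeriv_succ (x : 𝔸) : Summable fun m => expTermFDeriv 𝕂 (m + 1) x :=
  (Real.summable_pow_div_factorial ‖x‖).of_norm_bounded (norm_expTermFDeriv_succ_le · x)

theorem hasFDerivAt_exp_tsum_expTermFDeriv (A : 𝔸) :
    HasFDerivAt exp (∑' m, expTermFDeriv 𝕂 (m + 1) A) A := by
  have hA : A ∈ Metric.ball (0 : 𝔸) (‖A‖ + 1) := by simp
  have hbound : ∀ m, ∀ x ∈ Metric.ball (0 : 𝔸) (‖A‖ + 1),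
      ‖expTermFDeriv 𝕂 (m + 1) x‖ ≤ (‖A‖ + 1) ^ m / m ! := fun m x hx => by
    refine (norm_expTermFDeriv_succ_le m x).trans ?_
    gcongr
    exact (mem_ball_zero_iff.mp hx).le
  let : NormedSpace ℝ 𝔸 := NormedSpace.restrictScalars ℝ 𝕂 𝔸
  have htsum : HasFDerivAt (fun x : 𝔸 => ∑' m, ((m + 1)!⁻¹ : 𝕂) • x ^ (m + 1))
      (∑' m, expTermFDeriv 𝕂 (m + 1) A) A :=
    hasFDerivAt_tsum_of_isPreconnected (Real.summable_pow_div_factorial (‖A‖ + 1))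
      Metric.isOpen_ball (convex_ball _ _).isPreconnected
      (fun m x _ => hasFDerivAt_inv_factorial_smul_pow (m + 1) x) hbound hA
      ((summable_nat_add_iff 1).mpr (expSeries_summable' A)) hA
  simpa only [← exp_eq_one_add_tsum] using htsum.const_add 1

theorem tsum_expTermFDeriv_succ_apply (A B : 𝔸) :
    (∑' m, expTermFDeriv 𝕂 (m + 1) A) B =
      ∑' m, ((m + 1)!⁻¹ : 𝕂) • ∑ p ∈ antidiagonal m, A ^ p.1 * B * A ^ p.2 := by
  simp only [← expTermFDeriv_succ_apply]
  exact (ContinuousLinearMap.apply 𝕂 𝔸 B).map_tsum (summable_expTermFDeriv_succ A)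

theorem exp_mul_tsum_smul_iterate_ad (A B : 𝔸) :
    exp A * ∑' k, ((-1 : 𝕂) ^ k / ((k + 1)! : 𝕂)) • (fun Z => A * Z - Z * A)^[k] B =
      ∑' m, ((m + 1)!⁻¹ : 𝕂) • ∑ p ∈ antidiagonal m, A ^ p.1 * B * A ^ p.2 := by
  rw [congrFun (exp_eq_tsum 𝕂) A, tsum_mul_tsum_eq_tsum_sum_antidiagonal_of_summable_norm
    (norm_expSeries_summable' A) (summable_norm_smul_iterate_ad A B)]
  exact tsum_congr (sum_antidiagonal_inv_factorial_smul_pow_mul_iterate_ad A B)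

end NormedAlgebra

open scoped Matrix.Norms.L2Operator

theorem hasDerivAt_exp_comp_dexp_formula_general (n : ℕ)
    (X : ℝ → Matrix (Fin n) (Fin n) ℂ) (τ₀ : ℝ) (X' : Matrix (Fin n) (Fin n) ℂ)
    (hX : HasDerivAt X X' τ₀) :
    HasDerivAt (fun τ : ℝ => NormedSpace.exp (X τ))
      (NormedSpace.exp (X τ₀) *
        ∑' k : ℕ, (((-1 : ℂ) ^ k / (Nat.factorial (k + 1) : ℂ)) •
          (fun Z : Matrix (Fin n) (Fin n) ℂ => X τ₀ * Z - Z * X τ₀)^[k] X'))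
      τ₀ := by
  have hexp := (hasFDerivAt_exp_tsum_expTermFDeriv (𝕂 := ℂ) (X τ₀)).restrictScalars ℝ
  rw [exp_mul_tsum_smul_iterate_ad, ← tsum_expTermFDeriv_succ_apply]
  exact hexp.comp_hasDerivAt τ₀ hX

/-- If `X : ℝ → Matrix (Fin n) (Fin n) ℂ` is differentiable at `τ₀` with derivative `X'`,
then `τ ↦ exp(X(τ))` is differentiable at `τ₀` with derivative
`exp(X(τ₀)) * ∑_{k=0}^∞ ((−1)^k/(k+1)!) • (ad_{X(τ₀)})^k(X')`, where `ad_A(Z) = A*Z − Z*A`. -/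
theorem hasDerivAt_exp_comp_dexp_formula (n : ℕ) (hn : 1 ≤ n)
    (X : ℝ → Matrix (Fin n) (Fin n) ℂ) (τ₀ : ℝ) (X' : Matrix (Fin n) (Fin n) ℂ)
    (hX : HasDerivAt X X' τ₀) :
    HasDerivAt (fun τ : ℝ => NormedSpace.exp (X τ))
      (NormedSpace.exp (X τ₀) *
        ∑' k : ℕ, (((-1 : ℂ) ^ k / (Nat.factorial (k + 1) : ℂ)) •
          (fun Z : Matrix (Fin n) (Fin n) ℂ => X τ₀ * Z - Z * X τ₀)^[k] X'))
      τ₀ :=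
  hasDerivAt_exp_comp_dexp_formula_general n X τ₀ X' hX
end

section
/- Let n ≥ 1. There exists a constant C > 0 such that for all n×n complex matrices X, Y with ‖X‖ ≤ 1 and ‖Y‖ ≤ 1, setting c₁ = X + Y, c₂ = (1/2)(X*Y − Y*X), c₃ = (1/12)(X²*Y + Y*X² − 2*X*Y*X + Y²*X + X*Y² − 2*Y*X*Y), and c₄ = (1/24)(X²*Y² − 2*X*Y*X*Y − Y²*X² + 2*Y*X*Y*X), one has ‖exp(X) * exp(Y) − exp(c₁ + c₂ + c₃ + c₄)‖ ≤ C · (‖X‖ + ‖Y‖)⁵. (These are the first four terms of the Baker–Campbell–Hausdorff expansion e^X e^Y = e^Z.) -/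
/-!
Write `E A = ∑_{k<5} A^k / k!`. The tail `exp A - E A` is `O(‖A‖⁵)` uniformly for bounded `A`,
so it suffices to compare `E X * E Y` with `E Z`, where `Z` is the BCH polynomial. Give `X` and `Y`
weight `1` and the `k`-th BCH term weight `k`. The parts of weight `≤ 4` of `E X * E Y` and of
`E Z` coincide (this is what determines the BCH coefficients up to order four), and a product of
weight `≥ 5` is `O((‖X‖ + ‖Y‖)⁵)` as long as `‖X‖, ‖Y‖ ≤ 1`.
-/

open NormedSpace Asymptotics Filter Finset
open scoped Nat

section ExpTail
variable {𝕂 𝔸 α : Type*} [RCLike 𝕂] [NormedRing 𝔸] [NormedAlgebra 𝕂 𝔸]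
  {l : Filter α} {s : α → ℝ} {f : α → 𝔸}

theorem isBigO_sum_range_smul_pow_one (hf₁ : f =O[l] fun _ ↦ (1 : ℝ)) (N : ℕ) :
    (fun x ↦ ∑ k ∈ range N, (k ! : 𝕂)⁻¹ • f x ^ k) =O[l] fun _ ↦ (1 : ℝ) :=
  IsBigO.fun_sum fun k _ ↦ by simpa using (hf₁.pow k).const_smul_left ((k ! : 𝕂)⁻¹)

variable [CompleteSpace 𝔸]

theorem norm_exp_sub_sum_range_le (A : 𝔸) {N : ℕ} (hN : N ≠ 0) :
    ‖exp A - ∑ k ∈ range N, (k ! : 𝕂)⁻¹ • A ^ k‖ ≤ ‖A‖ ^ N * Real.exp ‖A‖ := by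
  have htail : exp A - ∑ k ∈ range N, (k ! : 𝕂)⁻¹ • A ^ k
      = ∑' k, ((k + N)! : 𝕂)⁻¹ • A ^ (k + N) := by
    rw [congrFun (exp_eq_tsum 𝕂) A, ← (expSeries_summable' (𝕂 := 𝕂) A).sum_add_tsum_nat_add N]
    exact add_sub_cancel_left _ _
  have hexp : HasSum (fun k ↦ ‖A‖ ^ N * (‖A‖ ^ k / k !)) (‖A‖ ^ N * Real.exp ‖A‖) := by
    rw [Real.exp_eq_exp_ℝ]
    exact (expSeries_div_hasSum_exp ‖A‖).mul_left _
  rw [htail]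
  refine tsum_of_norm_bounded hexp fun k ↦ ?_
  calc ‖((k + N)! : 𝕂)⁻¹ • A ^ (k + N)‖ ≤ ((k + N)! : ℝ)⁻¹ * ‖A‖ ^ (k + N) := by
        rw [norm_smul, norm_inv, RCLike.norm_natCast]
        gcongr
        exact norm_pow_le' A (by omega)
    _ ≤ (k ! : ℝ)⁻¹ * ‖A‖ ^ (k + N) := by
        gcongr
        omega
    _ = ‖A‖ ^ N * (‖A‖ ^ k / k !) := by ring

theorem isBigO_exp_sub_sum_range (hf : f =O[l] s) (hf₁ : f =O[l] fun _ ↦ (1 : ℝ)) {N : ℕ}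
    (hN : N ≠ 0) :
    (fun x ↦ exp (f x) - ∑ k ∈ range N, (k ! : 𝕂)⁻¹ • f x ^ k) =O[l] fun x ↦ s x ^ N := by
  obtain ⟨C, hC⟩ := hf₁.bound
  have hexp : (fun x ↦ Real.exp ‖f x‖) =O[l] fun _ ↦ (1 : ℝ) :=
    .of_bound (Real.exp C) <| hC.mono fun x hx ↦ by
      simpa [Real.exp_le_exp] using hx
  refine (IsBigO.of_bound' (Eventually.of_forall fun x ↦ ?_)).trans
    (by simpa using (hf.norm_left.pow N).mul hexp)
  rw [Real.norm_of_nonneg (by positivity)]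
  exact norm_exp_sub_sum_range_le (f x) hN

end ExpTail

theorem isBigO_exp_comp_one {𝔸 α : Type*} [NormedRing 𝔸] [CompleteSpace 𝔸] (𝕂 : Type*) [RCLike 𝕂]
    [NormedAlgebra 𝕂 𝔸] {l : Filter α} {f : α → 𝔸} (hf₁ : f =O[l] fun _ ↦ (1 : ℝ)) :
    (fun x ↦ exp (f x)) =O[l] fun _ ↦ (1 : ℝ) := by
  have htail := isBigO_exp_sub_sum_range (𝕂 := 𝕂) hf₁ hf₁ one_ne_zero
  simp only [one_pow] at htail
  simpa using htail.add (isBigO_sum_range_smul_pow_one (𝕂 := 𝕂) hf₁ 1)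

section PowerOrder
variable {α 𝔸 : Type*} [SeminormedRing 𝔸] {l : Filter α} {s : α → ℝ}

theorem isBigO_pow_of_le (hs : s =O[l] fun _ ↦ (1 : ℝ)) {k m : ℕ} (h : k ≤ m) :
    (fun x ↦ s x ^ m) =O[l] fun x ↦ s x ^ k := by
  simpa [← pow_add, Nat.add_sub_cancel' h] using
    (isBigO_refl (fun x ↦ s x ^ k) l).mul (hs.pow (m - k))

theorem Asymptotics.IsBigO.mul_pow_add {f g : α → 𝔸} {a b : ℕ} (hf : f =O[l] fun x ↦ s x ^ a)
    (hg : g =O[l] fun x ↦ s x ^ b) : (fun x ↦ f x * g x) =O[l] fun x ↦ s x ^ (a + b) := by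
  simpa only [pow_add] using hf.mul hg

end PowerOrder

noncomputable section BCHAlgebra
variable {𝔸 : Type*} [Ring 𝔸] [Algebra ℂ 𝔸]

def bchTerm₂ (X Y : 𝔸) : 𝔸 := ((1 : ℂ) / 2) • (X * Y - Y * X)

def bchTerm₃ (X Y : 𝔸) : 𝔸 :=
  ((1 : ℂ) / 12) • (X * X * Y + Y * (X * X) - 2 • (X * Y * X)
    + Y * Y * X + X * (Y * Y) - 2 • (Y * X * Y))

def bchTerm₄ (X Y : 𝔸) : 𝔸 :=
  ((1 : ℂ) / 24) • (X * X * (Y * Y) - 2 • (X * Y * X * Y)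
    - Y * Y * (X * X) + 2 • (Y * X * Y * X))

def bch₄ (X Y : 𝔸) : 𝔸 := (X + Y) + bchTerm₂ X Y + bchTerm₃ X Y + bchTerm₄ X Y

/-- The part of weight `≤ 4` of `exp (U + c₂ + c₃ + c₄)` when `U` has weight `1` and `cₖ` has
weight `k`. -/
def expLowWeight (U c₂ c₃ c₄ : 𝔸) : 𝔸 :=
  1 + (U + c₂ + c₃ + c₄) + ((1 : ℂ) / 2) • (U * U + U * c₂ + c₂ * U + U * c₃ + c₃ * U + c₂ * c₂)
    + ((1 : ℂ) / 6) • (U * U * U + U * U * c₂ + U * c₂ * U + c₂ * U * U)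
    + ((1 : ℂ) / 24) • (U * U * U * U)

theorem sum_range_five_smul_pow (A : 𝔸) :
    ∑ k ∈ range 5, (k ! : ℂ)⁻¹ • A ^ k
      = 1 + A + (2⁻¹ : ℂ) • (A * A) + (6⁻¹ : ℂ) • (A * A * A) + (24⁻¹ : ℂ) • (A * A * A * A) := by
  simp [sum_range_succ, pow_succ, Nat.factorial]

theorem sum_low_weight_eq_expLowWeight_bch (X Y : 𝔸) :
    ∑ ij ∈ range 5 ×ˢ range 5 with ij.1 + ij.2 < 5,
        ((ij.1 ! : ℂ)⁻¹ * (ij.2 ! : ℂ)⁻¹) • (X ^ ij.1 * Y ^ ij.2)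
      = expLowWeight (X + Y) (bchTerm₂ X Y) (bchTerm₃ X Y) (bchTerm₄ X Y) := by
  simp only [sum_filter, sum_product, sum_range_succ, sum_range_zero, expLowWeight, bchTerm₂,
    bchTerm₃, bchTerm₄, two_smul]
  norm_num [Nat.factorial]
  simp only [mul_add, add_mul, mul_sub, sub_mul, smul_add, smul_sub, smul_smul, mul_assoc,
    pow_succ, pow_zero, one_mul]
  module

theorem sum_range_five_mul_sum_range_five (X Y : 𝔸) :
    (∑ i ∈ range 5, (i ! : ℂ)⁻¹ • X ^ i) * (∑ j ∈ range 5, (j ! : ℂ)⁻¹ • Y ^ j)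
      = expLowWeight (X + Y) (bchTerm₂ X Y) (bchTerm₃ X Y) (bchTerm₄ X Y)
        + ∑ ij ∈ range 5 ×ˢ range 5 with 5 ≤ ij.1 + ij.2,
            ((ij.1 ! : ℂ)⁻¹ * (ij.2 ! : ℂ)⁻¹) • (X ^ ij.1 * Y ^ ij.2) := by
  rw [← sum_low_weight_eq_expLowWeight_bch]
  simp_rw [← not_lt, sum_filter_add_sum_filter_not, sum_product, sum_mul_sum, smul_mul_smul]

theorem sum_range_five_sub_expLowWeight {U c₂ c₃ c₄ V W Z : 𝔸} (hV : c₃ + c₄ = V)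
    (hW : c₂ + V = W) (hZ : U + W = Z) :
    ∑ k ∈ range 5, (k ! : ℂ)⁻¹ • (U + c₂ + c₃ + c₄) ^ k - expLowWeight U c₂ c₃ c₄
      = ((1 : ℂ) / 2) • (U * c₄ + c₄ * U + W * V + V * c₂)
        + ((1 : ℂ) / 6) • (U * U * V + U * V * U + V * U * U + Z * W * W + W * U * W + W * W * U)
        + ((1 : ℂ) / 24) • (Z * Z * Z * W + Z * Z * W * U + Z * W * U * U + W * U * U * U) := by
  have h₁ : U + c₂ + c₃ + c₄ = Z := by rw [← hZ, ← hW, ← hV]; abel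
  have h₂ : Z * Z - (U * U + U * c₂ + c₂ * U + U * c₃ + c₃ * U + c₂ * c₂)
      = U * c₄ + c₄ * U + W * V + V * c₂ := by
    subst hV hW hZ; noncomm_ring
  have h₃ : Z * Z * Z - (U * U * U + U * U * c₂ + U * c₂ * U + c₂ * U * U)
      = U * U * V + U * V * U + V * U * U + Z * W * W + W * U * W + W * W * U := by
    subst hV hW hZ; noncomm_ring
  have h₄ : Z * Z * Z * Z - U * U * U * U
      = Z * Z * Z * W + Z * Z * W * U + Z * W * U * U + W * U * U * U := by
    rw [eq_sub_of_add_eq' hZ]; noncomm_ring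
  rw [h₁, sum_range_five_smul_pow, expLowWeight]
  linear_combination (norm := module) -h₁ + ((1 : ℂ) / 2) • h₂ + ((1 : ℂ) / 6) • h₃
    + ((1 : ℂ) / 24) • h₄

end BCHAlgebra

section BCHOrder
variable {α 𝔸 : Type*} [NormedRing 𝔸] [NormedAlgebra ℂ 𝔸] {l : Filter α} {s : α → ℝ}
  {X Y : α → 𝔸}

theorem isBigO_sum_range_sub_expLowWeight (hs : s =O[l] fun _ ↦ (1 : ℝ)) {U c₂ c₃ c₄ : α → 𝔸}
    (hU : U =O[l] fun x ↦ s x ^ 1) (h₂ : c₂ =O[l] fun x ↦ s x ^ 2)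
    (h₃ : c₃ =O[l] fun x ↦ s x ^ 3) (h₄ : c₄ =O[l] fun x ↦ s x ^ 4) :
    (fun x ↦ ∑ k ∈ range 5, (k ! : ℂ)⁻¹ • (U x + c₂ x + c₃ x + c₄ x) ^ k
        - expLowWeight (U x) (c₂ x) (c₃ x) (c₄ x)) =O[l] fun x ↦ s x ^ 5 := by
  have hV : (fun x ↦ c₃ x + c₄ x) =O[l] fun x ↦ s x ^ 3 :=
    h₃.add (h₄.trans (isBigO_pow_of_le hs (by norm_num)))
  have hW : (fun x ↦ c₂ x + (c₃ x + c₄ x)) =O[l] fun x ↦ s x ^ 2 :=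
    h₂.add (hV.trans (isBigO_pow_of_le hs (by norm_num)))
  have hZ : (fun x ↦ U x + (c₂ x + (c₃ x + c₄ x))) =O[l] fun x ↦ s x ^ 1 :=
    hU.add (hW.trans (isBigO_pow_of_le hs (by norm_num)))
  -- every product in `sum_range_five_sub_expLowWeight` has weight exactly `5`
  have h₂' := ((((hU.mul_pow_add h₄).add (h₄.mul_pow_add hU)).add (hW.mul_pow_add hV)).add
    (hV.mul_pow_add h₂)).const_smul_left ((1 : ℂ) / 2)
  have h₃' := (((((((hU.mul_pow_add hU).mul_pow_add hV).add
    ((hU.mul_pow_add hV).mul_pow_add hU)).add ((hV.mul_pow_add hU).mul_pow_add hU)).add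
    ((hZ.mul_pow_add hW).mul_pow_add hW)).add ((hW.mul_pow_add hU).mul_pow_add hW)).add
    ((hW.mul_pow_add hW).mul_pow_add hU)).const_smul_left ((1 : ℂ) / 6)
  have h₄' := ((((((hZ.mul_pow_add hZ).mul_pow_add hZ).mul_pow_add hW).add
    (((hZ.mul_pow_add hZ).mul_pow_add hW).mul_pow_add hU)).add
    (((hZ.mul_pow_add hW).mul_pow_add hU).mul_pow_add hU)).add
    (((hW.mul_pow_add hU).mul_pow_add hU).mul_pow_add hU)).const_smul_left ((1 : ℂ) / 24)
  exact ((h₂'.add h₃').add h₄').congr_left fun x ↦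
    (sum_range_five_sub_expLowWeight rfl rfl rfl).symm

theorem isBigO_sum_mul_sum_sub_expLowWeight (hs : s =O[l] fun _ ↦ (1 : ℝ)) (hX : X =O[l] s)
    (hY : Y =O[l] s) :
    (fun x ↦ (∑ i ∈ range 5, (i ! : ℂ)⁻¹ • X x ^ i) * (∑ j ∈ range 5, (j ! : ℂ)⁻¹ • Y x ^ j)
        - expLowWeight (X x + Y x) (bchTerm₂ (X x) (Y x)) (bchTerm₃ (X x) (Y x))
            (bchTerm₄ (X x) (Y x))) =O[l] fun x ↦ s x ^ 5 := by
  refine (IsBigO.fun_sum fun ij hij ↦ ?_).congr_left fun x ↦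
    by rw [sum_range_five_mul_sum_range_five, add_sub_cancel_left]
  exact (((hX.pow ij.1).mul_pow_add (hY.pow ij.2)).const_smul_left
    ((ij.1 ! : ℂ)⁻¹ * (ij.2 ! : ℂ)⁻¹)).trans
    (isBigO_pow_of_le hs (mem_filter.1 hij).2)

theorem isBigO_bchTerm₂ (hX : X =O[l] fun x ↦ s x ^ 1) (hY : Y =O[l] fun x ↦ s x ^ 1) :
    (fun x ↦ bchTerm₂ (X x) (Y x)) =O[l] fun x ↦ s x ^ 2 :=
  ((hX.mul_pow_add hY).sub (hY.mul_pow_add hX)).const_smul_left ((1 : ℂ) / 2)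

theorem isBigO_bchTerm₃ (hX : X =O[l] fun x ↦ s x ^ 1) (hY : Y =O[l] fun x ↦ s x ^ 1) :
    (fun x ↦ bchTerm₃ (X x) (Y x)) =O[l] fun x ↦ s x ^ 3 := by
  have hXYX := (hX.mul_pow_add hY).mul_pow_add hX
  have hYXY := (hY.mul_pow_add hX).mul_pow_add hY
  refine (((((((hX.mul_pow_add hX).mul_pow_add hY).add (hY.mul_pow_add (hX.mul_pow_add hX))).sub
    (hXYX.add hXYX)).add ((hY.mul_pow_add hY).mul_pow_add hX)).add
    (hX.mul_pow_add (hY.mul_pow_add hY))).sub (hYXY.add hYXY)).const_smul_left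
    ((1 : ℂ) / 12) |>.congr_left fun x ↦ ?_
  simp only [bchTerm₃, two_smul, Pi.smul_apply]

theorem isBigO_bchTerm₄ (hX : X =O[l] fun x ↦ s x ^ 1) (hY : Y =O[l] fun x ↦ s x ^ 1) :
    (fun x ↦ bchTerm₄ (X x) (Y x)) =O[l] fun x ↦ s x ^ 4 := by
  have hXYXY := ((hX.mul_pow_add hY).mul_pow_add hX).mul_pow_add hY
  have hYXYX := ((hY.mul_pow_add hX).mul_pow_add hY).mul_pow_add hX
  refine (((((hX.mul_pow_add hX).mul_pow_add (hY.mul_pow_add hY)).sub (hXYXY.add hXYXY)).sub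
    ((hY.mul_pow_add hY).mul_pow_add (hX.mul_pow_add hX))).add (hYXYX.add hYXYX)).const_smul_left
    ((1 : ℂ) / 24) |>.congr_left fun x ↦ ?_
  simp only [bchTerm₄, two_smul, Pi.smul_apply]

end BCHOrder

section BCH
variable {𝔸 : Type*} [NormedRing 𝔸] [NormedAlgebra ℂ 𝔸] [CompleteSpace 𝔸]

theorem isBigO_exp_mul_exp_sub_exp_bch₄ {α : Type*} {l : Filter α} {s : α → ℝ} {X Y : α → 𝔸}
    (hs : s =O[l] fun _ ↦ (1 : ℝ)) (hX : X =O[l] s) (hY : Y =O[l] s) :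
    (fun x ↦ exp (X x) * exp (Y x) - exp (bch₄ (X x) (Y x))) =O[l] fun x ↦ s x ^ 5 := by
  have hX₁ : X =O[l] fun x ↦ s x ^ 1 := by simpa using hX
  have hY₁ : Y =O[l] fun x ↦ s x ^ 1 := by simpa using hY
  have hZ : (fun x ↦ bch₄ (X x) (Y x)) =O[l] s := by
    simpa [bch₄] using (((hX₁.add hY₁).add ((isBigO_bchTerm₂ hX₁ hY₁).trans (isBigO_pow_of_le hs
      (by norm_num)))).add ((isBigO_bchTerm₃ hX₁ hY₁).trans (isBigO_pow_of_le hs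
      (by norm_num)))).add ((isBigO_bchTerm₄ hX₁ hY₁).trans (isBigO_pow_of_le hs (by norm_num)))
  have hTailX := isBigO_exp_sub_sum_range (𝕂 := ℂ) hX (hX.trans hs) (N := 5) (by norm_num)
  have hTailY := isBigO_exp_sub_sum_range (𝕂 := ℂ) hY (hY.trans hs) (N := 5) (by norm_num)
  have hTailZ := isBigO_exp_sub_sum_range (𝕂 := ℂ) hZ (hZ.trans hs) (N := 5) (by norm_num)
  have hLowXY := isBigO_sum_mul_sum_sub_expLowWeight hs hX hY
  have hLowZ := isBigO_sum_range_sub_expLowWeight hs (hX₁.add hY₁) (isBigO_bchTerm₂ hX₁ hY₁)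
    (isBigO_bchTerm₃ hX₁ hY₁) (isBigO_bchTerm₄ hX₁ hY₁)
  have h₁ : (fun x ↦ (exp (X x) - ∑ i ∈ range 5, (i ! : ℂ)⁻¹ • X x ^ i) * exp (Y x))
      =O[l] fun x ↦ s x ^ 5 := by
    simpa using hTailX.mul (isBigO_exp_comp_one ℂ (hY.trans hs))
  have h₂ : (fun x ↦ (∑ i ∈ range 5, (i ! : ℂ)⁻¹ • X x ^ i)
      * (exp (Y x) - ∑ j ∈ range 5, (j ! : ℂ)⁻¹ • Y x ^ j)) =O[l] fun x ↦ s x ^ 5 := by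
    simpa using (isBigO_sum_range_smul_pow_one (𝕂 := ℂ) (hX.trans hs) 5).mul hTailY
  refine ((((h₁.add h₂).add hLowXY).sub hLowZ).sub hTailZ).congr_left fun x ↦ ?_
  simp only [bch₄]
  noncomm_ring

theorem exists_norm_exp_mul_exp_sub_exp_bch₄_le :
    ∃ C : ℝ, 0 < C ∧ ∀ X Y : 𝔸, ‖X‖ ≤ 1 → ‖Y‖ ≤ 1 →
      ‖exp X * exp Y - exp (bch₄ X Y)‖ ≤ C * (‖X‖ + ‖Y‖) ^ 5 := by
  set D := {p : 𝔸 × 𝔸 | ‖p.1‖ ≤ 1 ∧ ‖p.2‖ ≤ 1}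
  have hs : (fun p : 𝔸 × 𝔸 ↦ ‖p.1‖ + ‖p.2‖) =O[𝓟 D] fun _ ↦ (1 : ℝ) :=
    .of_bound 2 <| eventually_principal.2 fun p ⟨h₁, h₂⟩ ↦ by
      rw [norm_one, Real.norm_of_nonneg (by positivity)]
      linarith
  have hX : (fun p : 𝔸 × 𝔸 ↦ p.1) =O[𝓟 D] fun p ↦ ‖p.1‖ + ‖p.2‖ :=
    .of_bound' <| .of_forall fun p ↦ by
      rw [Real.norm_of_nonneg (by positivity)]
      exact le_add_of_nonneg_right (norm_nonneg _)
  have hY : (fun p : 𝔸 × 𝔸 ↦ p.2) =O[𝓟 D] fun p ↦ ‖p.1‖ + ‖p.2‖ :=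
    .of_bound' <| .of_forall fun p ↦ by
      rw [Real.norm_of_nonneg (by positivity)]
      exact le_add_of_nonneg_left (norm_nonneg _)
  obtain ⟨c, hc⟩ := isBigO_principal.1 (isBigO_exp_mul_exp_sub_exp_bch₄ hs hX hY)
  refine ⟨max c 1, by positivity, fun X Y hX hY ↦ ?_⟩
  calc _ ≤ c * ‖(‖X‖ + ‖Y‖) ^ 5‖ := hc (X, Y) ⟨hX, hY⟩
    _ ≤ max c 1 * (‖X‖ + ‖Y‖) ^ 5 := by
      rw [Real.norm_of_nonneg (by positivity)]
      gcongr
      exact le_max_left c 1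

end BCH

open scoped Matrix.Norms.L2Operator

theorem bch_fourth_order_general (n : ℕ) :
    ∃ C : ℝ, 0 < C ∧ ∀ X Y : Matrix (Fin n) (Fin n) ℂ, ‖X‖ ≤ 1 → ‖Y‖ ≤ 1 →
      ‖NormedSpace.exp X * NormedSpace.exp Y -
          NormedSpace.exp
            ((X + Y) + ((1 : ℂ) / 2) • (X * Y - Y * X) +
              ((1 : ℂ) / 12) • (X * X * Y + Y * (X * X) - 2 • (X * Y * X)
                + Y * Y * X + X * (Y * Y) - 2 • (Y * X * Y)) +
              ((1 : ℂ) / 24) • (X * X * (Y * Y) - 2 • (X * Y * X * Y)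
                - Y * Y * (X * X) + 2 • (Y * X * Y * X)))‖ ≤
        C * (‖X‖ + ‖Y‖) ^ 5 :=
  exists_norm_exp_mul_exp_sub_exp_bch₄_le

/-- Fourth-order Baker–Campbell–Hausdorff estimate: there is `C > 0` such that for all
`n × n` complex matrices `X`, `Y` of norm at most `1`, with `c₁, c₂, c₃, c₄` the first four
BCH terms, `‖exp X * exp Y − exp(c₁ + c₂ + c₃ + c₄)‖ ≤ C (‖X‖ + ‖Y‖)⁵`. -/
theorem bch_fourth_order (n : ℕ) (hn : 1 ≤ n) :
    ∃ C : ℝ, 0 < C ∧ ∀ X Y : Matrix (Fin n) (Fin n) ℂ, ‖X‖ ≤ 1 → ‖Y‖ ≤ 1 →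
      ‖NormedSpace.exp X * NormedSpace.exp Y -
          NormedSpace.exp
            ((X + Y) + ((1 : ℂ) / 2) • (X * Y - Y * X) +
              ((1 : ℂ) / 12) • (X * X * Y + Y * (X * X) - 2 • (X * Y * X)
                + Y * Y * X + X * (Y * Y) - 2 • (Y * X * Y)) +
              ((1 : ℂ) / 24) • (X * X * (Y * Y) - 2 • (X * Y * X * Y)
                - Y * Y * (X * X) + 2 • (Y * X * Y * X)))‖ ≤
        C * (‖X‖ + ‖Y‖) ^ 5 :=
  bch_fourth_order_general n
end

section
/- Let n ≥ 1. Let G_a, G_b, G_c be unitary n×n complex matrices, let F, F' be arbitrary n×n complex matrices, and let U, V be invertible n×n complex matrices. Then the parallel-transported curvature pairing appearing in each term of the simplicial gauge theory action is gauge invariant: Re tr( U * (F − 𝟙) * U⁻¹ * V * (F' − 𝟙)ᴴ * V⁻¹ ) is unchanged when one simultaneously replaces F by G_a * F * G_aᴴ, F' by G_c * F' * G_cᴴ, U by G_b * U * G_aᴴ, and V by G_b * V * G_cᴴ. -/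
open Matrix

/-- Gauge invariance of a single term of the simplicial gauge theory action: with `Gₐ, G_b, G_c`
unitary, `F, F'` arbitrary matrices and `U, V` invertible parallel transport matrices, the
quantity `Re tr(U (F − 1) U⁻¹ V (F' − 1)ᴴ V⁻¹)` is unchanged under the replacements
`F ↦ Gₐ F Gₐᴴ`, `F' ↦ G_c F' G_cᴴ`, `U ↦ G_b U Gₐᴴ`, `V ↦ G_b V G_cᴴ`. -/
theorem sgt_term_gauge_invariant (n : ℕ) (hn : 1 ≤ n)
    (Ga Gb Gc F F' U V : Matrix (Fin n) (Fin n) ℂ)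
    (hGa : Gaᴴ * Ga = 1) (hGb : Gbᴴ * Gb = 1) (hGc : Gcᴴ * Gc = 1)
    (hU : IsUnit U) (hV : IsUnit V) :
    (((Gb * U * Gaᴴ) * (Ga * F * Gaᴴ - 1) * (Gb * U * Gaᴴ)⁻¹ *
        (Gb * V * Gcᴴ) * (Gc * F' * Gcᴴ - 1)ᴴ * (Gb * V * Gcᴴ)⁻¹).trace).re =
      ((U * (F - 1) * U⁻¹ * V * (F' - 1)ᴴ * V⁻¹).trace).re := by
  have hGa' : Ga * Gaᴴ = 1 := mul_eq_one_comm.mp hGa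
  have hGb' : Gb * Gbᴴ = 1 := mul_eq_one_comm.mp hGb
  have hGc' : Gc * Gcᴴ = 1 := mul_eq_one_comm.mp hGc
  have hUi : U * U⁻¹ = 1 := Matrix.mul_nonsing_inv U ((Matrix.isUnit_iff_isUnit_det U).mp hU)
  have hVi : V * V⁻¹ = 1 := Matrix.mul_nonsing_inv V ((Matrix.isUnit_iff_isUnit_det V).mp hV)
  have hUinv : (Gb * U * Gaᴴ)⁻¹ = Ga * U⁻¹ * Gbᴴ := by
    apply Matrix.inv_eq_right_inv
    calc Gb * U * Gaᴴ * (Ga * U⁻¹ * Gbᴴ)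
        = Gb * (U * (Gaᴴ * Ga) * U⁻¹) * Gbᴴ := by noncomm_ring
      _ = 1 := by rw [hGa]; simp [hUi, hGb']
  have hVinv : (Gb * V * Gcᴴ)⁻¹ = Gc * V⁻¹ * Gbᴴ := by
    apply Matrix.inv_eq_right_inv
    calc Gb * V * Gcᴴ * (Gc * V⁻¹ * Gbᴴ)
        = Gb * (V * (Gcᴴ * Gc) * V⁻¹) * Gbᴴ := by noncomm_ring
      _ = 1 := by rw [hGc]; simp [hVi, hGb']
  have hFc : (Gc * F' * Gcᴴ - 1)ᴴ = Gc * (F' - 1)ᴴ * Gcᴴ := by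
    simp [conjTranspose_sub, Matrix.sub_mul, Matrix.mul_sub, hGc', Matrix.mul_assoc]
  have hFa : Ga * F * Gaᴴ - 1 = Ga * (F - 1) * Gaᴴ := by
    rw [Matrix.mul_sub, Matrix.sub_mul, Matrix.mul_one, hGa', Matrix.mul_assoc]
  have ca : ∀ X : Matrix (Fin n) (Fin n) ℂ, Gaᴴ * (Ga * X) = X := fun X => by
    rw [← Matrix.mul_assoc, hGa, Matrix.one_mul]
  have cb : ∀ X : Matrix (Fin n) (Fin n) ℂ, Gbᴴ * (Gb * X) = X := fun X => by
    rw [← Matrix.mul_assoc, hGb, Matrix.one_mul]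
  have cc : ∀ X : Matrix (Fin n) (Fin n) ℂ, Gcᴴ * (Gc * X) = X := fun X => by
    rw [← Matrix.mul_assoc, hGc, Matrix.one_mul]
  have key : (Gb * U * Gaᴴ) * (Ga * F * Gaᴴ - 1) * (Gb * U * Gaᴴ)⁻¹ *
        (Gb * V * Gcᴴ) * (Gc * F' * Gcᴴ - 1)ᴴ * (Gb * V * Gcᴴ)⁻¹ =
      Gb * (U * (F - 1) * U⁻¹ * V * (F' - 1)ᴴ * V⁻¹) * Gbᴴ := by
    rw [hUinv, hVinv, hFc, hFa]
    simp only [Matrix.mul_assoc]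
    simp only [ca, cb, cc]
  rw [key, Matrix.trace_mul_cycle, ← Matrix.mul_assoc, hGb, Matrix.one_mul]
end

section
/- Let n ≥ 1, let V be a finite type (the vertices), and let ι be a finite type (the pointed faces) with a map d : ι → V assigning to each face its distinguished point. Let F : ι → (n×n complex matrices) be a family of discrete curvatures, let U : V → V → (n×n complex matrices) assign an invertible parallel transport matrix to each ordered pair of vertices, let M : ι → ι → ℝ be an arbitrary real mass matrix, and let G : V → (n×n complex matrices) assign a unitary matrix to each vertex. Then the simplicial gauge theory sum S := ∑_{i,j} M i j · Re tr( U (d j) (d i) * (F i − 𝟙) * (U (d j) (d i))⁻¹ * (F j − 𝟙)ᴴ ) is invariant under the discrete gauge transformation F i ↦ G (d i) * (F i) * (G (d i))ᴴ and U v w ↦ G v * (U v w) * (G w)ᴴ; i.e. the sum computed from the transformed data equals S. -/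
open Matrix

/-- The (spatial part of the) simplicial gauge theory action
`S = ∑_{i,j} M i j · Re tr( U(d j)(d i) (F i − 1) (U(d j)(d i))⁻¹ (F j − 1)ᴴ )`
is invariant under the discrete gauge transformation
`F i ↦ G(d i) (F i) (G(d i))ᴴ`, `U v w ↦ G v (U v w) (G w)ᴴ`,
where `G` assigns a unitary matrix to each vertex. -/
theorem sgt_action_gauge_invariant (n : ℕ) (hn : 1 ≤ n)
    (V ι : Type) [Fintype V] [Fintype ι] (d : ι → V)
    (F : ι → Matrix (Fin n) (Fin n) ℂ)
    (U : V → V → Matrix (Fin n) (Fin n) ℂ)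
    (hU : ∀ v w, IsUnit (U v w))
    (M : ι → ι → ℝ)
    (G : V → Matrix (Fin n) (Fin n) ℂ)
    (hG : ∀ v, (G v)ᴴ * G v = 1) :
    (∑ i : ι, ∑ j : ι, M i j *
        (((G (d j) * U (d j) (d i) * (G (d i))ᴴ) *
            (G (d i) * F i * (G (d i))ᴴ - 1) *
            (G (d j) * U (d j) (d i) * (G (d i))ᴴ)⁻¹ *
            (G (d j) * F j * (G (d j))ᴴ - 1)ᴴ).trace).re) =
      ∑ i : ι, ∑ j : ι, M i j *
        ((U (d j) (d i) * (F i - 1) * (U (d j) (d i))⁻¹ * (F j - 1)ᴴ).trace).re := by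
  have hG' : ∀ v, G v * (G v)ᴴ = 1 := fun v => mul_eq_one_comm.mp (hG v)
  have hc : ∀ v (A : Matrix (Fin n) (Fin n) ℂ), (G v)ᴴ * (G v * A) = A := fun v A => by
    rw [← mul_assoc, hG, one_mul]
  refine Finset.sum_congr rfl fun i _ => Finset.sum_congr rfl fun j _ => ?_
  congr 2
  have hinv : (G (d j) * U (d j) (d i) * (G (d i))ᴴ)⁻¹
      = G (d i) * (U (d j) (d i))⁻¹ * (G (d j))ᴴ := by
    apply Matrix.inv_eq_right_inv
    have hUinv : U (d j) (d i) * (U (d j) (d i))⁻¹ = 1 :=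
      Matrix.mul_nonsing_inv _ ((Matrix.isUnit_iff_isUnit_det _).mp (hU _ _))
    calc G (d j) * U (d j) (d i) * (G (d i))ᴴ * (G (d i) * (U (d j) (d i))⁻¹ * (G (d j))ᴴ)
        = G (d j) * (U (d j) (d i) * (U (d j) (d i))⁻¹ * (G (d j))ᴴ) := by
          simp only [mul_assoc, hc]
      _ = 1 := by rw [hUinv, one_mul, hG']
  have hF : ∀ k, G (d k) * F k * (G (d k))ᴴ - 1
      = G (d k) * (F k - 1) * (G (d k))ᴴ := by
    intro k
    rw [Matrix.mul_sub, Matrix.mul_one, Matrix.sub_mul, hG' (d k)]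
  have hFj : (G (d j) * F j * (G (d j))ᴴ - 1)ᴴ
      = G (d j) * (F j - 1)ᴴ * (G (d j))ᴴ := by
    rw [hF j, conjTranspose_mul, conjTranspose_mul, conjTranspose_conjTranspose, mul_assoc]
  rw [hinv, hF i, hFj]
  have key : (G (d j) * U (d j) (d i) * (G (d i))ᴴ) *
      (G (d i) * (F i - 1) * (G (d i))ᴴ) *
      (G (d i) * (U (d j) (d i))⁻¹ * (G (d j))ᴴ) *
      (G (d j) * (F j - 1)ᴴ * (G (d j))ᴴ) =
      G (d j) * (U (d j) (d i) * (F i - 1) * (U (d j) (d i))⁻¹ * (F j - 1)ᴴ) * (G (d j))ᴴ := by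
    simp only [mul_assoc, hc]
  rw [key, Matrix.trace_mul_cycle, ← mul_assoc, hG, one_mul]
end

section
/- Let n ≥ 1, let V be a finite type (the vertices) and ι a finite type (the oriented edges) with maps s, t : ι → V giving the origin and target of each edge. Let φ : V → ℂⁿ be a discrete scalar field, let U : V → V → (n×n complex matrices) assign a parallel transport matrix to each ordered pair of vertices, let M : ι → ι → ℝ be an arbitrary real mass matrix, and let G : V → (n×n complex matrices) assign a unitary matrix to each vertex. For each edge e define δ_e := φ(t e) − U (t e) (s e) * φ(s e). Then the discrete scalar field action S := ∑_{e,e'} M e e' · Re⟨δ_e, U (t e) (t e') * δ_{e'}⟩ is invariant under the discrete gauge transformation φ v ↦ G v * φ v and U v w ↦ G v * (U v w) * (G w)ᴴ; i.e. the sum computed from the transformed data equals S. -/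
open Matrix

lemma gauge_delta {n : ℕ} (A B W : Matrix (Fin n) (Fin n) ℂ)
    (hB : Bᴴ * B = 1) (x y : Fin n → ℂ) :
    A *ᵥ x - (A * W * Bᴴ) *ᵥ (B *ᵥ y) = A *ᵥ (x - W *ᵥ y) := by
  rw [mulVec_mulVec, mul_assoc, mul_assoc, hB, mul_one, mulVec_sub, mulVec_mulVec]

lemma gauge_dot {n : ℕ} (A C W : Matrix (Fin n) (Fin n) ℂ)
    (hA : Aᴴ * A = 1) (hC : Cᴴ * C = 1) (x y : Fin n → ℂ) :
    star (A *ᵥ x) ⬝ᵥ ((A * W * Cᴴ) *ᵥ (C *ᵥ y)) = star x ⬝ᵥ (W *ᵥ y) := by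
  rw [mulVec_mulVec, mul_assoc, mul_assoc, hC, mul_one, star_mulVec,
    dotProduct_mulVec, vecMul_vecMul, ← mul_assoc, hA, one_mul,
    ← dotProduct_mulVec]

/-- The discrete gauge-invariant scalar field action
`S = ∑_{e,e'} M e e' · Re⟨δ_e, U(t e)(t e') δ_{e'}⟩`, with covariant differences
`δ_e = φ(t e) − U(t e)(s e) φ(s e)`, is invariant under the discrete gauge transformation
`φ v ↦ G v φ v`, `U v w ↦ G v (U v w) (G w)ᴴ`, where `G` assigns a unitary matrix to
each vertex. -/
theorem scalar_action_gauge_invariant (n : ℕ) (hn : 1 ≤ n)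
    (V ι : Type) [Fintype V] [Fintype ι] (s t : ι → V)
    (φ : V → (Fin n → ℂ))
    (U : V → V → Matrix (Fin n) (Fin n) ℂ)
    (M : ι → ι → ℝ)
    (G : V → Matrix (Fin n) (Fin n) ℂ)
    (hG : ∀ v, (G v)ᴴ * G v = 1) :
    (∑ e : ι, ∑ e' : ι, M e e' *
        (star (G (t e) *ᵥ φ (t e) -
              (G (t e) * U (t e) (s e) * (G (s e))ᴴ) *ᵥ (G (s e) *ᵥ φ (s e))) ⬝ᵥ
            ((G (t e) * U (t e) (t e') * (G (t e'))ᴴ) *ᵥ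
              (G (t e') *ᵥ φ (t e') -
                (G (t e') * U (t e') (s e') * (G (s e'))ᴴ) *ᵥ (G (s e') *ᵥ φ (s e'))))).re) =
      ∑ e : ι, ∑ e' : ι, M e e' *
        (star (φ (t e) - U (t e) (s e) *ᵥ φ (s e)) ⬝ᵥ
          (U (t e) (t e') *ᵥ (φ (t e') - U (t e') (s e') *ᵥ φ (s e')))).re := by
  refine Finset.sum_congr rfl fun e _ => Finset.sum_congr rfl fun e' _ => ?_
  rw [gauge_delta _ _ _ (hG (s e)), gauge_delta _ _ _ (hG (s e')),
    gauge_dot _ _ _ (hG (t e)) (hG (t e'))]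
end

section
/- Let n ≥ 1. There exists a constant C > 0 such that for all n×n complex matrices X, Y, D with ‖X‖ ≤ 1, ‖Y‖ ≤ 1 and ‖D‖ ≤ 1, one has ‖exp(X) * exp(Y) * exp(−X − Y + D) − (𝟙 + D + (1/2) • (X*Y − Y*X))‖ ≤ C · ((‖X‖ + ‖Y‖)³ + (‖X‖ + ‖Y‖)·‖D‖ + ‖D‖²). (This is the expansion F_f^s(A) = 𝟙 + J_f^s(𝓕^s(A)) + O(A³ + A dA) of the discrete spatial curvature of a triangular face: with edge values X = A_{e₁}, Y = A_{e₂} and A_{e₃} = −A_{e₁} − A_{e₂} + (dA)_f = −X − Y + D, the holonomy around the face agrees with 𝟙 plus the interpolated curvature D + ½[X,Y] up to the stated error.) -/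
/-!
In any Banach algebra the Taylor remainder of `exp` after the terms of degree `< k` has norm at
most `‖x‖ ^ k * Real.exp ‖x‖`. Writing `exp X = 1 + a`, `exp Y = 1 + b`, `exp Z = 1 + c` with
`Z = -X - Y + D` and expanding `(1 + a) (1 + b) (1 + c)`, the terms of degree at most two in
`X, Y, Z` add up, because `X + Y + Z = D`, to `D + ½ [X, Y] + ½ (D² + [X + Y, D])`. Every other
term is cubic in `s = ‖X‖ + ‖Y‖ + ‖D‖`, and `s³ ≤ 9 (t³ + t ‖D‖ + ‖D‖²)` for `t = ‖X‖ + ‖Y‖`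
when `t ≤ 2` and `‖D‖ ≤ 1`.
-/

open scoped Nat Matrix.Norms.L2Operator
open NormedSpace Finset

theorem one_add_mul_one_add_mul_one_add_sub {𝕜 A : Type*} [Field 𝕜] [CharZero 𝕜] [Ring A]
    [Algebra 𝕜 A] (a b c X Y D : A) :
    (1 + a) * (1 + b) * (1 + c) - (1 + D + (2⁻¹ : 𝕜) • (X * Y - Y * X)) =
      ((a - X - (2⁻¹ : 𝕜) • X ^ 2) + (b - Y - (2⁻¹ : 𝕜) • Y ^ 2) +
          (c - (-X - Y + D) - (2⁻¹ : 𝕜) • (-X - Y + D) ^ 2)) +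
        ((a * b - X * Y) + (a * c - X * (-X - Y + D)) + (b * c - Y * (-X - Y + D))) +
        a * b * c + (2⁻¹ : 𝕜) • (D ^ 2 + (X + Y) * D - D * (X + Y)) := by
  simp only [sq, mul_add, add_mul, mul_sub, sub_mul, mul_neg, neg_mul, smul_add, smul_sub,
    smul_neg, mul_one, one_mul]
  module

theorem add_pow_three_le_of_le_two_of_le_one {t d : ℝ} (ht₀ : 0 ≤ t) (ht : t ≤ 2)
    (hd₀ : 0 ≤ d) (hd : d ≤ 1) : (t + d) ^ 3 ≤ 9 * (t ^ 3 + t * d + d ^ 2) := by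
  nlinarith [mul_nonneg ht₀ hd₀, mul_nonneg (mul_nonneg ht₀ hd₀) hd₀,
    mul_nonneg (mul_nonneg ht₀ ht₀) hd₀]

section NormedRing

variable {𝔸 : Type*} [NormedRing 𝔸]

theorem norm_inv_two_smul_sq_add_mul_sub_mul_le {𝕂 : Type*} [RCLike 𝕂] [NormedAlgebra 𝕂 𝔸]
    (S D : 𝔸) : ‖(2⁻¹ : 𝕂) • (D ^ 2 + S * D - D * S)‖ ≤ ‖S‖ * ‖D‖ + 2⁻¹ * ‖D‖ ^ 2 := by
  have hcomm : ‖D ^ 2 + S * D - D * S‖ ≤ ‖D‖ ^ 2 + 2 * (‖S‖ * ‖D‖) :=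
    calc _ ≤ ‖D ^ 2‖ + ‖S * D‖ + ‖D * S‖ :=
          (norm_sub_le _ _).trans (add_le_add_left (norm_add_le _ _) _)
      _ ≤ ‖D‖ ^ 2 + ‖S‖ * ‖D‖ + ‖D‖ * ‖S‖ := by
          gcongr
          exacts [norm_pow_le' D two_pos, norm_mul_le _ _, norm_mul_le _ _]
      _ = ‖D‖ ^ 2 + 2 * (‖S‖ * ‖D‖) := by ring
  rw [norm_smul, norm_inv, RCLike.norm_ofNat]
  linarith

variable [CompleteSpace 𝔸]

theorem norm_exp_sub_sum_range_le_s14 (𝕂 : Type*) [RCLike 𝕂] [NormedAlgebra 𝕂 𝔸] {x : 𝔸} {r : ℝ}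
    (hx : ‖x‖ ≤ r) {k : ℕ} (hk : 0 < k) :
    ‖exp x - ∑ m ∈ range k, (m !⁻¹ : 𝕂) • x ^ m‖ ≤ r ^ k * Real.exp r := by
  have htail : HasSum (fun i => (((i + k) !)⁻¹ : 𝕂) • x ^ (i + k))
      (exp x - ∑ m ∈ range k, (m !⁻¹ : 𝕂) • x ^ m) :=
    (hasSum_nat_add_iff' k).mpr (exp_series_hasSum_exp' x)
  have hexp : HasSum (fun i => r ^ k * (r ^ i / i !)) (r ^ k * Real.exp r) := by
    rw [Real.exp_eq_exp_ℝ]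
    exact (expSeries_div_hasSum_exp r).mul_left _
  refine htail.norm_le_of_bounded hexp fun i => ?_
  have hr : 0 ≤ r := (norm_nonneg x).trans hx
  rw [norm_smul, norm_inv, RCLike.norm_natCast, inv_mul_eq_div]
  calc ‖x ^ (i + k)‖ / ((i + k) ! : ℝ) ≤ r ^ (i + k) / i ! := by
        gcongr
        · exact (norm_pow_le' x (by omega)).trans (by gcongr)
        · omega
    _ = r ^ k * (r ^ i / i !) := by ring

theorem norm_exp_sub_one_mul_exp_sub_one_sub_mul_le (𝕂 : Type*) [RCLike 𝕂]
    [NormedAlgebra 𝕂 𝔸] {x y : 𝔸} {r : ℝ} (hx : ‖x‖ ≤ r) (hy : ‖y‖ ≤ r) :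
    ‖(exp x - 1) * (exp y - 1) - x * y‖ ≤ (Real.exp r ^ 2 + Real.exp r) * r ^ 3 := by
  have hx₂ : ‖exp x - 1 - x‖ ≤ r ^ 2 * Real.exp r := by
    simpa [sum_range_succ, sub_add_eq_sub_sub] using
      norm_exp_sub_sum_range_le_s14 𝕂 hx (k := 2) (by norm_num)
  have hy₁ : ‖exp y - 1‖ ≤ r ^ 1 * Real.exp r := by
    simpa using norm_exp_sub_sum_range_le_s14 𝕂 hy (k := 1) (by norm_num)
  have hy₂ : ‖exp y - 1 - y‖ ≤ r ^ 2 * Real.exp r := by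
    simpa [sum_range_succ, sub_add_eq_sub_sub] using
      norm_exp_sub_sum_range_le_s14 𝕂 hy (k := 2) (by norm_num)
  have hr : 0 ≤ r := (norm_nonneg x).trans hx
  calc ‖(exp x - 1) * (exp y - 1) - x * y‖
      = ‖(exp x - 1 - x) * (exp y - 1) + x * (exp y - 1 - y)‖ := by congr 1; noncomm_ring
    _ ≤ ‖exp x - 1 - x‖ * ‖exp y - 1‖ + ‖x‖ * ‖exp y - 1 - y‖ :=
        (norm_add_le _ _).trans (add_le_add (norm_mul_le _ _) (norm_mul_le _ _))
    _ ≤ r ^ 2 * Real.exp r * (r ^ 1 * Real.exp r) + r * (r ^ 2 * Real.exp r) := by gcongr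
    _ = (Real.exp r ^ 2 + Real.exp r) * r ^ 3 := by ring

theorem norm_exp_mul_exp_mul_exp_sub_le {𝕂 : Type*} [RCLike 𝕂] [NormedAlgebra 𝕂 𝔸]
    (X Y D : 𝔸) :
    ‖exp X * exp Y * exp (-X - Y + D) - (1 + D + (2⁻¹ : 𝕂) • (X * Y - Y * X))‖ ≤
      (Real.exp (‖X‖ + ‖Y‖ + ‖D‖) + 2) ^ 3 * (‖X‖ + ‖Y‖ + ‖D‖) ^ 3 +
        (‖X‖ + ‖Y‖) * ‖D‖ + ‖D‖ ^ 2 := by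
  set s := ‖X‖ + ‖Y‖ + ‖D‖
  set M := Real.exp s
  set Z := -X - Y + D
  have hXs : ‖X‖ ≤ s := by linarith [norm_nonneg Y, norm_nonneg D]
  have hYs : ‖Y‖ ≤ s := by linarith [norm_nonneg X, norm_nonneg D]
  have hZs : ‖Z‖ ≤ s := (norm_add_le _ _).trans (by linarith [norm_sub_le (-X) Y, norm_neg X])
  have hR (x : 𝔸) (hx : ‖x‖ ≤ s) : ‖exp x - 1 - x - (2⁻¹ : 𝕂) • x ^ 2‖ ≤ s ^ 3 * M := by
    simpa [sum_range_succ, sub_add_eq_sub_sub] using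
      norm_exp_sub_sum_range_le_s14 𝕂 hx (k := 3) (by norm_num)
  have h₁ (x : 𝔸) (hx : ‖x‖ ≤ s) : ‖exp x - 1‖ ≤ s * M := by
    simpa using norm_exp_sub_sum_range_le_s14 𝕂 hx (k := 1) (by norm_num)
  have hP (x y : 𝔸) (hx : ‖x‖ ≤ s) (hy : ‖y‖ ≤ s) :=
    norm_exp_sub_one_mul_exp_sub_one_sub_mul_le 𝕂 hx hy
  have hQ := norm_inv_two_smul_sq_add_mul_sub_mul_le (𝕂 := 𝕂) (X + Y) D
  have hXY := norm_add_le X Y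
  have key := one_add_mul_one_add_mul_one_add_sub (𝕜 := 𝕂) (exp X - 1) (exp Y - 1) (exp Z - 1)
    X Y D
  simp only [add_sub_cancel] at key
  rw [key]
  calc _ ≤ _ := norm_add₄_le
    _ ≤ 3 * (s ^ 3 * M) + 3 * ((M ^ 2 + M) * s ^ 3) + (s * M) ^ 3 +
          ((‖X‖ + ‖Y‖) * ‖D‖ + ‖D‖ ^ 2) := by
      gcongr ?_ + ?_ + ?_ + ?_
      · exact norm_add₃_le.trans (by linarith [hR X hXs, hR Y hYs, hR Z hZs])
      · exact norm_add₃_le.trans (by linarith [hP X Y hXs hYs, hP X Z hXs hZs, hP Y Z hYs hZs])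
      · calc _ ≤ ‖exp X - 1‖ * ‖exp Y - 1‖ * ‖exp Z - 1‖ := norm_mul₃_le
          _ ≤ (s * M) * (s * M) * (s * M) := by gcongr <;> apply h₁ <;> assumption
          _ = (s * M) ^ 3 := by ring
      · nlinarith [norm_nonneg D]
    _ ≤ (M + 2) ^ 3 * s ^ 3 + (‖X‖ + ‖Y‖) * ‖D‖ + ‖D‖ ^ 2 := by
      have : 0 ≤ (3 * M ^ 2 + 6 * M + 8) * s ^ 3 := by positivity
      linarith

end NormedRing

theorem spatial_curvature_expansion_general (n : ℕ) :
    ∃ C : ℝ, 0 < C ∧ ∀ X Y D : Matrix (Fin n) (Fin n) ℂ,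
      ‖X‖ ≤ 1 → ‖Y‖ ≤ 1 → ‖D‖ ≤ 1 →
      ‖NormedSpace.exp X * NormedSpace.exp Y * NormedSpace.exp (-X - Y + D) -
          (1 + D + ((1 : ℂ) / 2) • (X * Y - Y * X))‖ ≤
        C * ((‖X‖ + ‖Y‖) ^ 3 + (‖X‖ + ‖Y‖) * ‖D‖ + ‖D‖ ^ 2) := by
  refine ⟨9 * (Real.exp 3 + 2) ^ 3 + 1, by positivity, fun X Y D hX hY hD => ?_⟩
  have hM : (Real.exp (‖X‖ + ‖Y‖ + ‖D‖) + 2) ^ 3 ≤ (Real.exp 3 + 2) ^ 3 := by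
    gcongr
    linarith
  have hcube := add_pow_three_le_of_le_two_of_le_one
    (add_nonneg (norm_nonneg X) (norm_nonneg Y)) (by linarith) (norm_nonneg D) hD
  have ht₃ : 0 ≤ (‖X‖ + ‖Y‖) ^ 3 := by positivity
  rw [one_div]
  refine (norm_exp_mul_exp_mul_exp_sub_le X Y D).trans ?_
  calc _ ≤ (Real.exp 3 + 2) ^ 3 * (9 * ((‖X‖ + ‖Y‖) ^ 3 + (‖X‖ + ‖Y‖) * ‖D‖ + ‖D‖ ^ 2)) +
        (‖X‖ + ‖Y‖) * ‖D‖ + ‖D‖ ^ 2 := by gcongr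
    _ ≤ _ := by linarith

/-- Expansion of the discrete spatial curvature of a triangular face: there is `C > 0` such
that for all `n × n` complex matrices `X, Y, D` of norm at most `1`,
`‖exp X · exp Y · exp(−X − Y + D) − (1 + D + ½ [X,Y])‖
  ≤ C ((‖X‖+‖Y‖)³ + (‖X‖+‖Y‖)‖D‖ + ‖D‖²)`. -/
theorem spatial_curvature_expansion (n : ℕ) (hn : 1 ≤ n) :
    ∃ C : ℝ, 0 < C ∧ ∀ X Y D : Matrix (Fin n) (Fin n) ℂ,
      ‖X‖ ≤ 1 → ‖Y‖ ≤ 1 → ‖D‖ ≤ 1 →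
      ‖NormedSpace.exp X * NormedSpace.exp Y * NormedSpace.exp (-X - Y + D) -
          (1 + D + ((1 : ℂ) / 2) • (X * Y - Y * X))‖ ≤
        C * ((‖X‖ + ‖Y‖) ^ 3 + (‖X‖ + ‖Y‖) * ‖D‖ + ‖D‖ ^ 2) :=
  spatial_curvature_expansion_general n
end
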